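/- For every complex number q with |q| < 1 (with values of q making any denominator factor 1 + q^j vanish excluded), ∑_{m≥1, n≥0} q^{2m+n} (−q; q)_m (−q; q)_{m−1}^2 (q^3; q^3)_{m+n−1} / [ (−q^3; q^3)_m (q; q)_{m+n−1} (−q; q)_{m+n}^2 ] = (1/6)·(−q; q)_∞ (q^3; q^3)_∞ / [ (q; q)_∞ (−q^3; q^3)_∞ ] + (1/3)·(q^3; q^3)_∞ / [ (−q; q)_∞ (q^2; q^2)_∞ ] − 1/2. -/

import Mathlib

/-!
With `E m = (-q;q)_m^3 / (-q^3;q^3)_m`, the identity `(1 + x)^3 - (1 + x^3) = 3x(1 + x)` makes the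
summand `(E (m+1) - E m) * w (m+n)` for an explicit weight `w`. Summing over each antidiagonal
`m + n = k` telescopes in `m` to `(E (k+1) - 1) * w k`, which is again a difference `u (k+1) - u k`,
where `u k` is the right-hand side with every infinite product truncated at `k`. Absolute
convergence of the double sum follows from `‖E m‖ ≤ B` and `‖w k‖ ≤ C ‖q‖^k`, both coming from
convergence of the finite products to nonzero limits.
-/

/-- Finite q-Pochhammer symbol `(a; q)_n = ∏_{j=0}^{n-1} (1 - a q^j)`. -/
noncomputable def qPoch (q a : ℂ) (n : ℕ) : ℂ := ∏ j ∈ Finset.range n, (1 - a * q ^ j)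

/-- Infinite q-Pochhammer symbol `(a; q)_∞ = ∏_{j=0}^{∞} (1 - a q^j)`. -/
noncomputable def qPochInf (q a : ℂ) : ℂ := ∏' j : ℕ, (1 - a * q ^ j)

open Filter Topology Finset Asymptotics

theorem HasSum.sum_antidiagonal {A α : Type*} [AddCommMonoid A] [HasAntidiagonal A]
    [AddCommMonoid α] [TopologicalSpace α] [ContinuousAdd α] [T3Space α]
    {f : A × A → α} {a : α} (h : HasSum f a) :
    HasSum (fun n => ∑ p ∈ antidiagonal n, f p) a :=
  (HasAntidiagonal.sigmaAntidiagonalEquivProd.hasSum_iff.mpr h).sigma fun n =>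
    (antidiagonal n).hasSum fun p => f p

theorem HasSum.eq_sub_of_tendsto {α : Type*} [AddCommGroup α] [TopologicalSpace α]
    [IsTopologicalAddGroup α] [T2Space α] {u : ℕ → α} {s L : α}
    (h : HasSum (fun n => u (n + 1) - u n) s) (hu : Tendsto u atTop (𝓝 L)) : s = L - u 0 := by
  refine tendsto_nhds_unique h.tendsto_sum_nat ?_
  simp only [sum_range_sub]
  exact hu.sub_const _

@[simp] lemma qPoch_zero (x a : ℂ) : qPoch x a 0 = 1 := prod_range_zero _

lemma qPoch_succ (x a : ℂ) (n : ℕ) : qPoch x a (n + 1) = qPoch x a n * (1 - a * x ^ n) :=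
  prod_range_succ _ _

lemma qPoch_sq_sq (x a : ℂ) (n : ℕ) : qPoch (x ^ 2) (a ^ 2) n = qPoch x a n * qPoch x (-a) n := by
  simp only [qPoch, ← prod_mul_distrib]
  exact prod_congr rfl fun j _ => by ring

section
variable {x a : ℂ}

lemma one_sub_mul_pow_ne_zero (hx : ‖x‖ ≤ 1) (ha : ‖a‖ < 1) (j : ℕ) : 1 - a * x ^ j ≠ 0 := by
  have : ‖a * x ^ j‖ < 1 := by
    rw [norm_mul, norm_pow]
    exact mul_lt_one_of_nonneg_of_lt_one_left (norm_nonneg a) ha (pow_le_one₀ (norm_nonneg x) hx)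
  intro h
  rw [← sub_eq_zero.mp h, norm_one] at this
  exact this.false

lemma qPoch_ne_zero (hx : ‖x‖ ≤ 1) (ha : ‖a‖ < 1) (n : ℕ) : qPoch x a n ≠ 0 :=
  prod_ne_zero_iff.mpr fun j _ => one_sub_mul_pow_ne_zero hx ha j

lemma summable_log_one_sub_mul_pow (hx : ‖x‖ < 1) :
    Summable fun j => Complex.log (1 - a * x ^ j) := by
  simpa [sub_eq_add_neg] using Complex.summable_log_one_add_of_summable
    ((summable_geometric_of_norm_lt_one hx).mul_left a).neg

lemma tendsto_qPoch (hx : ‖x‖ < 1) : Tendsto (qPoch x a) atTop (𝓝 (qPochInf x a)) :=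
  (Complex.multipliable_of_summable_log (summable_log_one_sub_mul_pow hx)).hasProd.tendsto_prod_nat

lemma qPochInf_ne_zero (hx : ‖x‖ < 1) (ha : ‖a‖ < 1) : qPochInf x a ≠ 0 := by
  rw [qPochInf, ← Complex.cexp_tsum_eq_tprod (one_sub_mul_pow_ne_zero hx.le ha)
    (summable_log_one_sub_mul_pow hx)]
  exact Complex.exp_ne_zero _

end

theorem Finset.Nat.sum_antidiagonal_sub_mul {R : Type*} [Ring R] (E g : ℕ → R) (k : ℕ) :
    ∑ p ∈ antidiagonal k, (E (p.1 + 1) - E p.1) * g (p.1 + p.2) = (E (k + 1) - E 0) * g k := by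
  rw [sum_congr rfl fun p hp => by rw [mem_antidiagonal.mp hp], ← sum_mul,
    Nat.sum_antidiagonal_eq_sum_range_succ_mk, sum_range_sub]

theorem summable_sub_mul_of_norm_le {R : Type*} [NormedRing R] [CompleteSpace R] {E g : ℕ → R}
    {B C r : ℝ} (hr0 : 0 ≤ r) (hr : r < 1) (hE : ∀ m, ‖E m‖ ≤ B) (hg : ∀ k, ‖g k‖ ≤ C * r ^ k) :
    Summable fun p : ℕ × ℕ => (E (p.1 + 1) - E p.1) * g (p.1 + p.2) := by
  have hgeom : Summable fun p : ℕ × ℕ => r ^ p.1 * r ^ p.2 :=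
    (summable_geometric_of_lt_one hr0 hr).mul_of_nonneg (summable_geometric_of_lt_one hr0 hr)
      (pow_nonneg hr0) (pow_nonneg hr0)
  refine .of_norm_bounded (hgeom.mul_left (2 * B * C)) fun p => ?_
  calc ‖(E (p.1 + 1) - E p.1) * g (p.1 + p.2)‖
      ≤ (‖E (p.1 + 1)‖ + ‖E p.1‖) * ‖g (p.1 + p.2)‖ :=
        (norm_mul_le _ _).trans (by gcongr; exact norm_sub_le _ _)
    _ ≤ (B + B) * (C * r ^ (p.1 + p.2)) :=
        mul_le_mul (add_le_add (hE _) (hE _)) (hg _) (norm_nonneg _)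
          (add_nonneg ((norm_nonneg _).trans (hE 0)) ((norm_nonneg _).trans (hE 0)))
    _ = 2 * B * C * (r ^ p.1 * r ^ p.2) := by ring

namespace DS2

noncomputable def cubeRatio (q : ℂ) (m : ℕ) : ℂ := qPoch q (-q) m ^ 3 / qPoch (q ^ 3) (-q ^ 3) m

noncomputable def weight (q : ℂ) (k : ℕ) : ℂ :=
  q ^ (k + 1) * qPoch (q ^ 3) (q ^ 3) k / (3 * (qPoch q q k * qPoch q (-q) (k + 1) ^ 2))

noncomputable def partialValue (q : ℂ) (k : ℕ) : ℂ :=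
  (1 / 6) * (qPoch q (-q) k * qPoch (q ^ 3) (q ^ 3) k) / (qPoch q q k * qPoch (q ^ 3) (-q ^ 3) k)
    + (1 / 3) * qPoch (q ^ 3) (q ^ 3) k / (qPoch q (-q) k * qPoch (q ^ 2) (q ^ 2) k)

@[simp] lemma cubeRatio_zero (q : ℂ) : cubeRatio q 0 = 1 := by simp [cubeRatio]

lemma partialValue_zero (q : ℂ) : partialValue q 0 = 1 / 2 := by norm_num [partialValue]

variable {q : ℂ} (hq : ‖q‖ < 1)
include hq

lemma norm_pow_lt_one {s : ℕ} (hs : s ≠ 0) : ‖q ^ s‖ < 1 := by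
  rw [norm_pow]; exact pow_lt_one₀ (norm_nonneg q) hq hs

lemma norm_neg_pow_lt_one {s : ℕ} (hs : s ≠ 0) : ‖-q ^ s‖ < 1 := by
  rw [norm_neg]; exact norm_pow_lt_one hq hs

lemma summand_eq_sub_mul_weight (m n : ℕ) :
    q ^ (2 * (m + 1) + n) * qPoch q (-q) (m + 1) * (qPoch q (-q) m) ^ 2 *
        qPoch (q ^ 3) (q ^ 3) (m + n) /
      (qPoch (q ^ 3) (-q ^ 3) (m + 1) * qPoch q q (m + n) * (qPoch q (-q) (m + 1 + n)) ^ 2)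
    = (cubeRatio q (m + 1) - cubeRatio q m) * weight q (m + n) := by
  have hm1 : ‖-q‖ < 1 := by rwa [norm_neg]
  have h3 := (norm_pow_lt_one hq three_ne_zero).le
  have hm3 := norm_neg_pow_lt_one hq three_ne_zero
  have := qPoch_ne_zero hq.le hm1 m
  have := qPoch_ne_zero h3 hm3 m
  have := qPoch_ne_zero hq.le hq (m + n)
  have := qPoch_ne_zero hq.le hm1 (m + n + 1)
  have := one_sub_mul_pow_ne_zero hq.le hm1 m
  have := one_sub_mul_pow_ne_zero h3 hm3 m
  rw [show m + 1 + n = m + n + 1 by omega, cubeRatio, cubeRatio, weight,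
    qPoch_succ q (-q) m, qPoch_succ (q ^ 3) (-q ^ 3) m]
  -- freeze the new factors, so that `field_simp` keeps them in the shape of the hypotheses above
  set u := 1 - -q * q ^ m with hu
  set v := 1 - -q ^ 3 * (q ^ 3) ^ m with hv
  field_simp
  rw [hu, hv]
  ring

lemma cubeRatio_succ_sub_one_mul_weight (k : ℕ) :
    (cubeRatio q (k + 1) - 1) * weight q k = partialValue q (k + 1) - partialValue q k := by
  have hm1 : ‖-q‖ < 1 := by rwa [norm_neg]
  have h3 := norm_pow_lt_one hq three_ne_zero
  have hm3 := norm_neg_pow_lt_one hq three_ne_zero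
  have := qPoch_ne_zero hq.le hm1 k
  have := qPoch_ne_zero h3.le hm3 k
  have := qPoch_ne_zero hq.le hq k
  have := qPoch_ne_zero h3.le h3 k
  have := one_sub_mul_pow_ne_zero hq.le hm1 k
  have := one_sub_mul_pow_ne_zero h3.le hm3 k
  have := one_sub_mul_pow_ne_zero hq.le hq k
  have := one_sub_mul_pow_ne_zero h3.le h3 k
  rw [cubeRatio, weight, partialValue, partialValue, qPoch_sq_sq, qPoch_sq_sq,
    qPoch_succ q (-q) k, qPoch_succ (q ^ 3) (-q ^ 3) k, qPoch_succ q q k,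
    qPoch_succ (q ^ 3) (q ^ 3) k]
  set u := 1 - -q * q ^ k with hu
  set v := 1 - -q ^ 3 * (q ^ 3) ^ k with hv
  set w := 1 - q * q ^ k with hw
  set z := 1 - q ^ 3 * (q ^ 3) ^ k with hz
  field_simp
  rw [hu, hv, hw, hz]
  ring

lemma exists_norm_cubeRatio_le : ∃ B, ∀ m, ‖cubeRatio q m‖ ≤ B :=
  isBigO_one_nat_atTop_iff.mp <| Tendsto.isBigO_one ℝ <| ((tendsto_qPoch hq).pow 3).div
    (tendsto_qPoch (norm_pow_lt_one hq three_ne_zero))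
    (qPochInf_ne_zero (norm_pow_lt_one hq three_ne_zero) (norm_neg_pow_lt_one hq three_ne_zero))

lemma exists_norm_weight_le : ∃ C, ∀ k, ‖weight q k‖ ≤ C * ‖q‖ ^ k := by
  have hm1 : ‖-q‖ < 1 := by rwa [norm_neg]
  have hlim : Tendsto
      (fun k => q * qPoch (q ^ 3) (q ^ 3) k / (3 * (qPoch q q k * qPoch q (-q) (k + 1) ^ 2)))
      atTop (𝓝 (q * qPochInf (q ^ 3) (q ^ 3) / (3 * (qPochInf q q * qPochInf q (-q) ^ 2)))) :=
    ((tendsto_qPoch (norm_pow_lt_one hq three_ne_zero)).const_mul q).div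
      (((tendsto_qPoch hq).mul
        (((tendsto_qPoch hq).comp (tendsto_add_atTop_nat 1)).pow 2)).const_mul 3)
      (mul_ne_zero three_ne_zero (mul_ne_zero (qPochInf_ne_zero hq hq)
        (pow_ne_zero 2 (qPochInf_ne_zero hq hm1))))
  obtain ⟨C, hC⟩ := isBigO_one_nat_atTop_iff.mp (hlim.isBigO_one ℝ)
  refine ⟨C, fun k => ?_⟩
  rw [weight, pow_succ, mul_assoc, mul_div_assoc, norm_mul, norm_pow, mul_comm]
  gcongr
  exact hC k

lemma tendsto_partialValue : Tendsto (partialValue q) atTop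
    (𝓝 ((1 / 6) * (qPochInf q (-q) * qPochInf (q ^ 3) (q ^ 3)) /
          (qPochInf q q * qPochInf (q ^ 3) (-q ^ 3))
      + (1 / 3) * qPochInf (q ^ 3) (q ^ 3) / (qPochInf q (-q) * qPochInf (q ^ 2) (q ^ 2)))) := by
  have hm1 : ‖-q‖ < 1 := by rwa [norm_neg]
  have h2 := norm_pow_lt_one hq two_ne_zero
  have h3 := norm_pow_lt_one hq three_ne_zero
  have hm3 := norm_neg_pow_lt_one hq three_ne_zero
  exact ((((tendsto_qPoch hq).mul (tendsto_qPoch h3)).const_mul _).div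
      ((tendsto_qPoch hq).mul (tendsto_qPoch h3))
      (mul_ne_zero (qPochInf_ne_zero hq hq) (qPochInf_ne_zero h3 hm3))).add
    (((tendsto_qPoch h3).const_mul _).div ((tendsto_qPoch hq).mul (tendsto_qPoch h2))
      (mul_ne_zero (qPochInf_ne_zero hq hm1) (qPochInf_ne_zero h2 h2)))

end DS2

/- The double sum is over `m ≥ 1, n ≥ 0`, encoded by `m = p.1 + 1`, `n = p.2`. -/
open DS2 in
theorem thmDS2_a (q : ℂ) (hq : ‖q‖ < 1) :
    ∑' p : ℕ × ℕ,
      q ^ (2 * (p.1 + 1) + p.2) * qPoch q (-q) (p.1 + 1) * (qPoch q (-q) p.1) ^ 2 *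
        qPoch (q ^ 3) (q ^ 3) (p.1 + p.2) /
      (qPoch (q ^ 3) (-q ^ 3) (p.1 + 1) * qPoch q q (p.1 + p.2) *
        (qPoch q (-q) (p.1 + 1 + p.2)) ^ 2)
    = (1 / 6) * (qPochInf q (-q) * qPochInf (q ^ 3) (q ^ 3)) /
          (qPochInf q q * qPochInf (q ^ 3) (-q ^ 3))
      + (1 / 3) * qPochInf (q ^ 3) (q ^ 3) / (qPochInf q (-q) * qPochInf (q ^ 2) (q ^ 2))
      - 1 / 2 := by
  obtain ⟨B, hB⟩ := exists_norm_cubeRatio_le hq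
  obtain ⟨C, hC⟩ := exists_norm_weight_le hq
  have hsum := (summable_sub_mul_of_norm_le (norm_nonneg q) hq hB hC).hasSum.sum_antidiagonal
  simp only [Nat.sum_antidiagonal_sub_mul, cubeRatio_zero,
    cubeRatio_succ_sub_one_mul_weight hq] at hsum
  calc _ = ∑' p : ℕ × ℕ, (cubeRatio q (p.1 + 1) - cubeRatio q p.1) * weight q (p.1 + p.2) :=
        tsum_congr fun p => summand_eq_sub_mul_weight hq p.1 p.2
    _ = _ := by rw [hsum.eq_sub_of_tendsto (tendsto_partialValue hq), partialValue_zero]
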